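/- arXiv:1901.10179 — 2 statements merged into one kernel-verified Lean document; each statement's English description precedes it below -/
import Mathlib

section
/- Let n ≥ 1, v = 4n+2, m = 2n+1, and for i ∈ {0,...,2n} set a_i = i and b_i = i + m in Fin v. Let S be a Steiner triple system on {0,...,2n} together with an orientation of its blocks. Then h1 = Σ over the oriented blocks of S, of the sum over the three directed edges (i,j) of that block of the directed-edge trades E(i,j), is a simple T(2,3,4n+2) trade of volume 2·C(2n+1,2) = 2n(2n+1). -/
/-- A `T(2,3,v)` trade: `f B = 0` unless `|B| = 3`, and every pair is balanced. -/
def isTrade (v : ℕ) (f : Finset (Fin v) → ℤ) : Prop :=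
  (∀ B : Finset (Fin v), B.card ≠ 3 → f B = 0) ∧
  ∀ P : Finset (Fin v), P.card = 2 →
    ∑ B ∈ Finset.univ.filter (fun B : Finset (Fin v) => B.card = 3 ∧ P ⊆ B), f B = 0

/-- A trade is simple if every value lies in `{-1, 0, 1}`. -/
def isSimple (v : ℕ) (f : Finset (Fin v) → ℤ) : Prop :=
  ∀ B : Finset (Fin v), f B = -1 ∨ f B = 0 ∨ f B = 1

/-- The volume of a trade: the sum of its positive entries. -/
def volume (v : ℕ) (f : Finset (Fin v) → ℤ) : ℤ :=
  ∑ B : Finset (Fin v), max (f B) 0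

/-- A `(2,3,v)`-halving: a simple trade taking value `±1` on every 3-subset. -/
def isHalving (v : ℕ) (f : Finset (Fin v) → ℤ) : Prop :=
  isTrade v f ∧ isSimple v f ∧
    ∀ B : Finset (Fin v), B.card = 3 → f B = 1 ∨ f B = -1

/-- The minimal trade `(a₀ a₁ a₂ ; b₀ b₁ b₂)`: it sends each of the eight sets
`{c₀,c₁,c₂}` with `cᵢ ∈ {aᵢ, bᵢ}` to `(-1)^(#{i : cᵢ = bᵢ})` and all other sets to 0. -/
def minimalTrade (v : ℕ) (a b : Fin 3 → Fin v) : Finset (Fin v) → ℤ :=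
  fun B => ∑ s : Fin 3 → Bool,
    (-1 : ℤ) ^ (Finset.univ.filter (fun i => s i = true)).card *
      (if B = Finset.image (fun i => if s i then b i else a i) Finset.univ then 1 else 0)

/-- The directed-edge trade `E(i,j) = 1_{{aᵢ,bᵢ,aⱼ}} + 1_{{aᵢ,bᵢ,bⱼ}} - 1_{{aⱼ,bⱼ,aᵢ}} - 1_{{aⱼ,bⱼ,bᵢ}}`. -/
def edgeTrade (v : ℕ) {ι : Type*} (a b : ι → Fin v) (i j : ι) : Finset (Fin v) → ℤ :=
  fun B => (if B = {a i, b i, a j} then 1 else 0) + (if B = {a i, b i, b j} then 1 else 0)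
    - (if B = {a j, b j, a i} then 1 else 0) - (if B = {a j, b j, b i} then 1 else 0)

/-!
Each directed-edge trade `E(i,j)` lives on the four 3-sets `{aᵢ,bᵢ,cⱼ}` and `{aⱼ,bⱼ,cᵢ}`
(`c ∈ {a,b}`), and a pair `P` meets it with total weight `2[P = {aᵢ,bᵢ}] - 2[P = {aⱼ,bⱼ}]`;
around the directed triangle of an oriented block these weights telescope, so every block
contributes a trade. A 3-set `{aᵢ,bᵢ,cⱼ}` with `i ≠ j` determines `(i, j, c)`, so `h₁` takes on
it the value `+1` or `-1` according as `(i,j)` or `(j,i)` is a directed edge of the unique block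
through `{i,j}`, and vanishes on every other set. Hence `h₁` is simple with `2·m(m-1)` nonzero
values, and since its values sum to zero, its volume is half that number.
-/

open Finset Function

lemma card_offDiag_eq_two_mul_choose {α : Type*} [DecidableEq α] (s : Finset α) :
    #s.offDiag = 2 * (#s).choose 2 := by
  rw [offDiag_card, Nat.choose_two_right, ← Nat.mul_sub_one,
    Nat.mul_div_cancel' (Nat.even_mul_pred_self _).two_dvd]

/-- The four cross pairs `{x or y, u or w}` each occur once with either sign. -/
lemma indicator_subset_pair_identity {α : Type*} [DecidableEq α] {x y u w : α}
    (hxy : x ≠ y) (hxu : x ≠ u) (hxw : x ≠ w) (hyu : y ≠ u) (hyw : y ≠ w) (huw : u ≠ w)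
    {P : Finset α} (hP : #P = 2) :
    ((if P ⊆ {x, y, u} then 1 else 0) + (if P ⊆ {x, y, w} then 1 else 0)
      - (if P ⊆ {u, w, x} then 1 else 0) - (if P ⊆ {u, w, y} then 1 else 0) : ℤ) =
      2 * (if P = {x, y} then 1 else 0) - 2 * (if P = {u, w} then 1 else 0) := by
  obtain ⟨p, q, hpq, rfl⟩ := card_eq_two.mp hP
  have hpair {r s : α} : ({p, q} : Finset α) = {r, s} ↔ p = r ∧ q = s ∨ p = s ∧ q = r := by
    simp [← coe_inj, Set.pair_eq_pair_iff]
  simp only [insert_subset_iff, singleton_subset_iff, mem_insert, mem_singleton, hpair]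
  split_ifs <;> grind

section GeneralTrades

variable {v : ℕ}

lemma isTrade_sum {κ : Type*} (S : Finset κ) {f : κ → Finset (Fin v) → ℤ}
    (hf : ∀ t ∈ S, isTrade v (f t)) : isTrade v (fun B => ∑ t ∈ S, f t B) := by
  refine ⟨fun B hB => sum_eq_zero fun t ht => (hf t ht).1 B hB, fun P hP => ?_⟩
  rw [sum_comm]
  exact sum_eq_zero fun t ht => (hf t ht).2 P hP

lemma two_mul_volume_of_isSimple {f : Finset (Fin v) → ℤ} (hf : isSimple v f)
    (hsum : ∑ B, f B = 0) : 2 * volume v f = #{B | f B ≠ 0} := by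
  have key : ∀ B, 2 * max (f B) 0 = f B + if f B ≠ 0 then 1 else 0 := fun B => by
    rcases hf B with h | h | h <;> simp [h]
  rw [volume, mul_sum, sum_congr rfl fun B _ => key B, sum_add_distrib, hsum, sum_boole]
  simp

end GeneralTrades

def blockTrade {v : ℕ} {ι : Type*} (a b : ι → Fin v) (t : ι × ι × ι) : Finset (Fin v) → ℤ :=
  edgeTrade v a b t.1 t.2.1 + edgeTrade v a b t.2.1 t.2.2 + edgeTrade v a b t.2.2 t.1

section EdgeTrades

variable {v : ℕ} {ι : Type*} {a b : ι → Fin v}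

lemma sum_edgeTrade (i j : ι) : ∑ B, edgeTrade v a b i j B = 0 := by
  simp [edgeTrade, sum_add_distrib, sum_sub_distrib]

lemma sum_sum_blockTrade (S : Finset (ι × ι × ι)) :
    ∑ B, ∑ t ∈ S, blockTrade a b t B = 0 := by
  rw [sum_comm]
  exact sum_eq_zero fun t _ => by simp [blockTrade, sum_add_distrib, sum_edgeTrade]

variable (ha : Injective a) (hb : Injective b) (hab : ∀ i j, a i ≠ b j)
include ha hb hab

lemma card_pair_insert_eq_three {i j : ι} (hij : i ≠ j) {c : Fin v} (hc : c = a j ∨ c = b j) :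
    #({a i, b i, c} : Finset (Fin v)) = 3 := by
  rcases hc with rfl | rfl
  · exact card_eq_three.mpr ⟨_, _, _, hab i i, ha.ne hij, (hab j i).symm, rfl⟩
  · exact card_eq_three.mpr ⟨_, _, _, hab i i, hab i j, hb.ne hij, rfl⟩

lemma edgeTrade_eq_zero_of_card_ne_three {i j : ι} (hij : i ≠ j) {B : Finset (Fin v)}
    (hB : #B ≠ 3) : edgeTrade v a b i j B = 0 := by
  have : ∀ {k l}, k ≠ l → ∀ {c}, c = a l ∨ c = b l → B ≠ {a k, b k, c} :=
    fun hkl _ hc hB' => hB (hB' ▸ card_pair_insert_eq_three ha hb hab hkl hc)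
  simp [edgeTrade, this hij (.inl rfl), this hij (.inr rfl), this hij.symm (.inl rfl),
    this hij.symm (.inr rfl)]

lemma pairSum_edgeTrade {i j : ι} (hij : i ≠ j) {P : Finset (Fin v)} (hP : #P = 2) :
    ∑ B ∈ univ.filter (fun B : Finset (Fin v) => #B = 3 ∧ P ⊆ B), edgeTrade v a b i j B =
      2 * (if P = {a i, b i} then 1 else 0) - 2 * (if P = {a j, b j} then 1 else 0) := by
  have h3 {k l : ι} (hkl : k ≠ l) {c} := card_pair_insert_eq_three (c := c) ha hb hab hkl
  simp only [edgeTrade, sum_add_distrib, sum_sub_distrib, sum_ite_eq', mem_filter, mem_univ,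
    true_and, h3 hij (.inl rfl), h3 hij (.inr rfl), h3 hij.symm (.inl rfl), h3 hij.symm (.inr rfl)]
  exact indicator_subset_pair_identity (hab i i) (ha.ne hij) (hab i j) ((hab j i).symm)
    (hb.ne hij) (hab j j) hP

lemma isTrade_blockTrade {t : ι × ι × ι} (ht : t.1 ≠ t.2.1 ∧ t.1 ≠ t.2.2 ∧ t.2.1 ≠ t.2.2) :
    isTrade v (blockTrade a b t) := by
  obtain ⟨hxy, hxz, hyz⟩ := ht
  refine ⟨fun B hB => ?_, fun P hP => ?_⟩
  · simp [blockTrade, edgeTrade_eq_zero_of_card_ne_three ha hb hab, hxy, hyz, hxz.symm, hB]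
  · simp only [blockTrade, Pi.add_apply, sum_add_distrib]
    rw [pairSum_edgeTrade ha hb hab hxy hP, pairSum_edgeTrade ha hb hab hyz hP,
      pairSum_edgeTrade ha hb hab hxz.symm hP]
    ring

end EdgeTrades

def edgeBlock {v : ℕ} {ι : Type*} (a b : ι → Fin v) (i j : ι) (c : Bool) : Finset (Fin v) :=
  {a i, b i, cond c (b j) (a j)}

section EdgeBlocks

variable {v : ℕ} {ι : Type*} {a b : ι → Fin v}

lemma edgeTrade_apply (i j : ι) (B : Finset (Fin v)) :
    edgeTrade v a b i j B =
      (if B = edgeBlock a b i j false then 1 else 0) + (if B = edgeBlock a b i j true then 1 else 0)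
        - (if B = edgeBlock a b j i false then 1 else 0)
        - (if B = edgeBlock a b j i true then 1 else 0) := rfl

lemma edgeTrade_eq_zero_of_ne_edgeBlock {x y : ι} (hxy : x ≠ y) {B : Finset (Fin v)}
    (hB : ∀ i j c, i ≠ j → B ≠ edgeBlock a b i j c) : edgeTrade v a b x y B = 0 := by
  simp [edgeTrade_apply, hB _ _ _ hxy, hB _ _ _ hxy.symm]

variable (ha : Injective a) (hb : Injective b) (hab : ∀ i j, a i ≠ b j)
include ha hb hab

lemma edgeBlock_inj {i j k l : ι} {c d : Bool} (hij : i ≠ j) (hkl : k ≠ l) :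
    edgeBlock a b i j c = edgeBlock a b k l d ↔ i = k ∧ j = l ∧ c = d := by
  refine ⟨fun h => ?_, by rintro ⟨rfl, rfl, rfl⟩; rfl⟩
  have hba : ∀ i j, b i ≠ a j := fun i j => (hab j i).symm
  have mem := Finset.ext_iff.mp h
  have h1 := mem (a i); have h2 := mem (b i); have h3 := mem (a k); have h4 := mem (b k)
  have h5 := mem (cond c (b j) (a j)); have h6 := mem (cond d (b l) (a l))
  cases c <;> cases d <;>
    simp [edgeBlock, ha.eq_iff, hb.eq_iff, hab, hba] at h1 h2 h3 h4 h5 h6 ⊢ <;> grind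

lemma edgeTrade_apply_edgeBlock [DecidableEq ι] {i j x y : ι} (hij : i ≠ j) (hxy : x ≠ y)
    (c : Bool) :
    edgeTrade v a b x y (edgeBlock a b i j c) =
      (if (i, j) = (x, y) then 1 else 0) - (if (i, j) = (y, x) then 1 else 0) := by
  cases c <;> simp [edgeTrade_apply, edgeBlock_inj ha hb hab hij, hxy, hxy.symm]

end EdgeBlocks

def arcSign {ι : Type*} [DecidableEq ι] (t : ι × ι × ι) (i j : ι) : ℤ :=
  ((if (i, j) = (t.1, t.2.1) then 1 else 0) - (if (i, j) = (t.2.1, t.1) then 1 else 0))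
    + ((if (i, j) = (t.2.1, t.2.2) then 1 else 0) - (if (i, j) = (t.2.2, t.2.1) then 1 else 0))
    + ((if (i, j) = (t.2.2, t.1) then 1 else 0) - (if (i, j) = (t.1, t.2.2) then 1 else 0))

section ArcSign

variable {ι : Type*} [DecidableEq ι] {t : ι × ι × ι} {i j : ι}

lemma arcSign_eq_zero
    (h : ¬ ((i = t.1 ∨ i = t.2.1 ∨ i = t.2.2) ∧ (j = t.1 ∨ j = t.2.1 ∨ j = t.2.2))) :
    arcSign t i j = 0 := by
  simp only [arcSign, Prod.mk.injEq]
  split_ifs <;> grind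

lemma arcSign_eq_one_or_neg_one (ht : t.1 ≠ t.2.1 ∧ t.1 ≠ t.2.2 ∧ t.2.1 ≠ t.2.2) (hij : i ≠ j)
    (h : (i = t.1 ∨ i = t.2.1 ∨ i = t.2.2) ∧ (j = t.1 ∨ j = t.2.1 ∨ j = t.2.2)) :
    arcSign t i j = 1 ∨ arcSign t i j = -1 := by
  simp only [arcSign, Prod.mk.injEq]
  split_ifs <;> grind

end ArcSign

section OrientedSTS

variable {v : ℕ} {ι : Type*} {a b : ι → Fin v} {S : Finset (ι × ι × ι)}
  (hSdist : ∀ t ∈ S, t.1 ≠ t.2.1 ∧ t.1 ≠ t.2.2 ∧ t.2.1 ≠ t.2.2)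
include hSdist

lemma sum_blockTrade_eq_zero_of_ne_edgeBlock {B : Finset (Fin v)}
    (hB : ∀ i j c, i ≠ j → B ≠ edgeBlock a b i j c) : ∑ t ∈ S, blockTrade a b t B = 0 := by
  refine sum_eq_zero fun t ht => ?_
  obtain ⟨h12, h13, h23⟩ := hSdist t ht
  simp only [blockTrade, Pi.add_apply, edgeTrade_eq_zero_of_ne_edgeBlock h12 hB,
    edgeTrade_eq_zero_of_ne_edgeBlock h23 hB, edgeTrade_eq_zero_of_ne_edgeBlock h13.symm hB,
    add_zero]

variable [DecidableEq ι] (ha : Injective a) (hb : Injective b) (hab : ∀ i j, a i ≠ b j)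
  (hSsts : ∀ x y : ι, x ≠ y → ∃! t, t ∈ S ∧
      (x = t.1 ∨ x = t.2.1 ∨ x = t.2.2) ∧ (y = t.1 ∨ y = t.2.1 ∨ y = t.2.2))
include ha hb hab hSsts

lemma sum_blockTrade_apply_edgeBlock {i j : ι} (hij : i ≠ j) (c : Bool) :
    ∑ t ∈ S, blockTrade a b t (edgeBlock a b i j c) = 1 ∨
      ∑ t ∈ S, blockTrade a b t (edgeBlock a b i j c) = -1 := by
  have hval : ∀ t ∈ S, blockTrade a b t (edgeBlock a b i j c) = arcSign t i j := fun t ht => by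
    obtain ⟨h12, h13, h23⟩ := hSdist t ht
    simp only [blockTrade, Pi.add_apply, edgeTrade_apply_edgeBlock ha hb hab hij h12,
      edgeTrade_apply_edgeBlock ha hb hab hij h23, edgeTrade_apply_edgeBlock ha hb hab hij h13.symm,
      arcSign]
  obtain ⟨t₀, ⟨ht₀, hij₀⟩, huniq⟩ := hSsts i j hij
  rw [sum_congr rfl hval, sum_eq_single_of_mem t₀ ht₀ fun t ht hne =>
    arcSign_eq_zero fun hij' => hne (huniq t ⟨ht, hij'⟩)]
  exact arcSign_eq_one_or_neg_one (hSdist t₀ ht₀) hij hij₀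

lemma isSimple_sum_blockTrade : isSimple v (fun B => ∑ t ∈ S, blockTrade a b t B) := by
  intro B
  by_cases hB : ∃ i j c, i ≠ j ∧ B = edgeBlock a b i j c
  · obtain ⟨i, j, c, hij, rfl⟩ := hB
    have := sum_blockTrade_apply_edgeBlock hSdist ha hb hab hSsts hij c
    tauto
  · push Not at hB
    exact .inr (.inl (sum_blockTrade_eq_zero_of_ne_edgeBlock hSdist hB))

lemma card_support_sum_blockTrade [Fintype ι] :
    #{B | ∑ t ∈ S, blockTrade a b t B ≠ 0} = #(univ : Finset ι).offDiag * 2 := by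
  have hsupp : ({B | ∑ t ∈ S, blockTrade a b t B ≠ 0} : Finset (Finset (Fin v))) =
      ((univ : Finset ι).offDiag ×ˢ univ).image fun p => edgeBlock a b p.1.1 p.1.2 p.2 := by
    ext B
    simp only [mem_filter, mem_univ, true_and, mem_image, mem_product, mem_offDiag, and_true,
      Prod.exists]
    constructor
    · intro hB
      by_contra! hB'
      exact hB <| sum_blockTrade_eq_zero_of_ne_edgeBlock hSdist fun i j c hij =>
        (hB' i j c hij).symm
    · rintro ⟨i, j, c, hij, rfl⟩
      rcases sum_blockTrade_apply_edgeBlock hSdist ha hb hab hSsts hij c with h | h <;> simp [h]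
  rw [hsupp, card_image_of_injOn, card_product, card_univ, Fintype.card_bool]
  rintro ⟨⟨i, j⟩, c⟩ hp ⟨⟨k, l⟩, d⟩ hq h
  simp only [coe_product, Set.mem_prod, mem_coe, mem_offDiag] at hp hq
  obtain ⟨rfl, rfl, rfl⟩ := (edgeBlock_inj ha hb hab hp.1.2.2 hq.1.2.2).mp h
  rfl

end OrientedSTS

theorem sts_cycle_trade_general
    (n : ℕ) (v m : ℕ) (hm : m = 2 * n + 1)
    (a b : Fin m → Fin v)
    (ha : ∀ i : Fin m, (a i : ℕ) = (i : ℕ)) (hb : ∀ i : Fin m, (b i : ℕ) = (i : ℕ) + m)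
    (S : Finset (Fin m × Fin m × Fin m))
    (hSdist : ∀ t ∈ S, t.1 ≠ t.2.1 ∧ t.1 ≠ t.2.2 ∧ t.2.1 ≠ t.2.2)
    (hSsts : ∀ x y : Fin m, x ≠ y → ∃! t, t ∈ S ∧
      (x = t.1 ∨ x = t.2.1 ∨ x = t.2.2) ∧ (y = t.1 ∨ y = t.2.1 ∨ y = t.2.2))
    (h₁ : Finset (Fin v) → ℤ)
    (hh₁ : h₁ = fun B => ∑ t ∈ S,
      (edgeTrade v a b t.1 t.2.1 B + edgeTrade v a b t.2.1 t.2.2 B +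
        edgeTrade v a b t.2.2 t.1 B)) :
    isTrade v h₁ ∧ isSimple v h₁ ∧ volume v h₁ = 2 * Nat.choose (2 * n + 1) 2 := by
  have ha_inj : Injective a := fun i j h => Fin.ext <| by simpa [ha] using congrArg Fin.val h
  have hb_inj : Injective b := fun i j h => Fin.ext <| by simpa [hb] using congrArg Fin.val h
  have hab : ∀ i j, a i ≠ b j := fun i j h => by
    have := congrArg Fin.val h
    rw [ha, hb] at this
    omega
  replace hh₁ : h₁ = fun B => ∑ t ∈ S, blockTrade a b t B := hh₁
  subst hh₁ hm
  have hsimple := isSimple_sum_blockTrade hSdist ha_inj hb_inj hab hSsts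
  refine ⟨isTrade_sum S fun t ht => isTrade_blockTrade ha_inj hb_inj hab (hSdist t ht), hsimple, ?_⟩
  have h2 := two_mul_volume_of_isSimple hsimple (sum_sum_blockTrade S)
  rw [card_support_sum_blockTrade hSdist ha_inj hb_inj hab hSsts, card_offDiag_eq_two_mul_choose,
    card_univ, Fintype.card_fin] at h2
  push_cast at h2
  linarith

/-- For `n ≥ 1`, `v = 4n+2`, `m = 2n+1`, `aᵢ = i`, `bᵢ = i + m`, and an oriented
Steiner triple system `S` on `{0,…,2n}`, the sum `h₁` over the oriented blocks of `S` of the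
directed-edge trades along their three directed edges is a simple `T(2,3,4n+2)` trade of
volume `2·C(2n+1,2) = 2n(2n+1)`. -/
theorem sts_cycle_trade
    (n : ℕ) (hn : 1 ≤ n) (v m : ℕ) (hv : v = 4 * n + 2) (hm : m = 2 * n + 1)
    (a b : Fin m → Fin v)
    (ha : ∀ i : Fin m, (a i : ℕ) = (i : ℕ)) (hb : ∀ i : Fin m, (b i : ℕ) = (i : ℕ) + m)
    (S : Finset (Fin m × Fin m × Fin m))
    (hSdist : ∀ t ∈ S, t.1 ≠ t.2.1 ∧ t.1 ≠ t.2.2 ∧ t.2.1 ≠ t.2.2)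
    (hSsts : ∀ x y : Fin m, x ≠ y → ∃! t, t ∈ S ∧
      (x = t.1 ∨ x = t.2.1 ∨ x = t.2.2) ∧ (y = t.1 ∨ y = t.2.1 ∨ y = t.2.2))
    (h₁ : Finset (Fin v) → ℤ)
    (hh₁ : h₁ = fun B => ∑ t ∈ S,
      (edgeTrade v a b t.1 t.2.1 B + edgeTrade v a b t.2.1 t.2.2 B +
        edgeTrade v a b t.2.2 t.1 B)) :
    isTrade v h₁ ∧ isSimple v h₁ ∧ volume v h₁ = 2 * Nat.choose (2 * n + 1) 2 :=
  sts_cycle_trade_general n v m hm a b ha hb S hSdist hSsts h₁ hh₁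
end

section
/- Let n ≥ 2, v = 4n+2, m = 2n+1, and for i ∈ {0,...,2n} set a_i = i and b_i = i + m in Fin v. Let S' be a Steiner triple system on {0,...,2n-2} together with an orientation of its blocks, and let M be a partition of {0,...,2n-3} into (n-1) two-element subsets, each written as an ordered pair (i,j). Then h2 = [Σ over the oriented blocks of S' of the sum over the three directed edges (i,j) of that block of E(i,j)] + [E(2n-2, 2n-1) + E(2n-1, 2n) + E(2n, 2n-2)] + [Σ over the pairs (i,j) of M of (E(2n-1, i) + E(i, 2n) + E(2n, j) + E(j, 2n-1))] is a simple T(2,3,4n+2) trade of volume 2·C(2n+1,2) = 2n(2n+1). -/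
/-!
`h₂` is the sum of `E(i, j)` over the arcs `(i, j)` of a tournament on the `2n + 1` indices: the
oriented blocks of `S'` join every two points of `{0, …, 2n-2}`, the triangle joins the points of
`{2n-2, 2n-1, 2n}`, and the 4-cycles join `2n-1` and `2n` to every point of `{0, …, 2n-3}`.
Summed over the triples containing a pair `P`, `E(i, j)` gives `2` at `P = {aᵢ, bᵢ}` and `-2` at
`P = {aⱼ, bⱼ}`; since the arcs form cycles, every index has equal in- and out-degree, so these
contributions cancel and `h₂` is a trade. A block `{aᵢ, bᵢ, x}` with `x ∈ {aⱼ, bⱼ}` determines the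
arc `(i, j)`, so the trades `E(i, j)` of different arcs of a tournament have disjoint supports.
Hence `h₂` is simple and its volume is twice the number of arcs, `2·C(2n+1, 2)`.
-/

open Finset Function

theorem Finset.pair_eq_pair_iff {α : Type*} [DecidableEq α] {x y z w : α} :
    ({x, y} : Finset α) = {z, w} ↔ x = z ∧ y = w ∨ x = w ∧ y = z := by
  rw [← coe_inj, coe_pair, coe_pair, Set.pair_eq_pair_iff]

theorem sum_fst_eq_sum_snd {α M : Type*} [AddCommMonoid M] {D : Finset (α × α)}
    (hbal : D.val.map Prod.fst = D.val.map Prod.snd) (g : α → M) :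
    ∑ q ∈ D, g q.1 = ∑ q ∈ D, g q.2 := by
  calc ∑ q ∈ D, g q.1 = ((D.val.map Prod.fst).map g).sum := by rw [Multiset.map_map]; rfl
    _ = ((D.val.map Prod.snd).map g).sum := by rw [hbal]
    _ = ∑ q ∈ D, g q.2 := by rw [Multiset.map_map]; rfl

theorem card_filter_eq_one_of_existsUnique {β : Type*} {s : Finset β} {p : β → Prop}
    [DecidablePred p] (h : ∃! x, x ∈ s ∧ p x) : (s.filter p).card = 1 :=
  card_eq_one_iff_existsUnique.mpr (by simpa only [mem_filter] using h)

section EdgeTrade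

variable {v : ℕ} {ι : Type*} {a b : ι → Fin v}

def posBlocks (a b : ι → Fin v) (i j : ι) : Finset (Finset (Fin v)) :=
  {{a i, b i, a j}, {a i, b i, b j}}

-- `i` is the only index with both `a i` and `b i` in the block.
theorem eq_of_mem_posBlocks (hab : Injective (Sum.elim a b)) {i j k l : ι}
    (hkl : k ≠ l) {B : Finset (Fin v)} (h : B ∈ posBlocks a b i j)
    (h' : B ∈ posBlocks a b k l) : i = k ∧ j = l := by
  obtain ⟨ha, hb, hne⟩ := Sum.elim_injective.mp hab
  simp only [posBlocks, mem_insert, mem_singleton] at h h'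
  have hk : a k ∈ B ∧ b k ∈ B := by rcases h' with rfl | rfl <;> simp
  have hl : a l ∈ B ∨ b l ∈ B := by rcases h' with rfl | rfl <;> simp
  have hik : i = k := by
    rcases h with rfl | rfl <;> simp only [mem_insert, mem_singleton] at hk <;> grind
  subst hik
  have hj : a j ∈ B ∨ b j ∈ B := by rcases h with rfl | rfl <;> simp
  rcases h with rfl | rfl <;> rcases h' with h' | h' <;>
    simp only [Finset.ext_iff, mem_insert, mem_singleton] at h' hl hj <;> grind

theorem card_eq_three_of_mem_posBlocks (hab : Injective (Sum.elim a b)) {i j : ι} (hij : i ≠ j)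
    {B : Finset (Fin v)} (h : B ∈ posBlocks a b i j) : B.card = 3 := by
  obtain ⟨ha, hb, hne⟩ := Sum.elim_injective.mp hab
  simp only [posBlocks, mem_insert, mem_singleton] at h
  rcases h with rfl | rfl <;> rw [card_eq_three] <;>
    exact ⟨_, _, _, hne i i, by grind, by grind, rfl⟩

theorem card_posBlocks (hab : Injective (Sum.elim a b)) {i j : ι} (hij : i ≠ j) :
    (posBlocks a b i j).card = 2 := by
  obtain ⟨ha, hb, hne⟩ := Sum.elim_injective.mp hab
  refine card_pair fun h => ?_
  have : a j ∈ ({a i, b i, b j} : Finset (Fin v)) := h ▸ by simp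
  simp only [mem_insert, mem_singleton] at this
  grind

theorem edgeTrade_eq (hab : Injective (Sum.elim a b)) {i j : ι} (hij : i ≠ j)
    (B : Finset (Fin v)) :
    edgeTrade v a b i j B =
      (if B ∈ posBlocks a b i j then 1 else 0) - (if B ∈ posBlocks a b j i then 1 else 0) := by
  have hne : ∀ {k l : ι}, k ≠ l → ({a k, b k, a l} : Finset (Fin v)) ≠ {a k, b k, b l} :=
    fun hkl h => by simpa [posBlocks, h] using card_posBlocks hab hkl
  have := hne hij
  have := hne hij.symm
  simp only [edgeTrade, posBlocks, mem_insert, mem_singleton]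
  split_ifs <;> grind

theorem sum_edgeTrade_filter_superset (hab : Injective (Sum.elim a b)) {i j : ι} (hij : i ≠ j)
    {P : Finset (Fin v)} (hP : P.card = 2) :
    ∑ B ∈ univ.filter (fun B : Finset (Fin v) => B.card = 3 ∧ P ⊆ B), edgeTrade v a b i j B =
      2 * (if P = {a i, b i} then 1 else 0) - 2 * (if P = {a j, b j} then 1 else 0) := by
  have hcard : ∀ {k l : ι}, k ≠ l → ({a k, b k, a l} : Finset (Fin v)).card = 3 ∧
      ({a k, b k, b l} : Finset (Fin v)).card = 3 := fun hkl =>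
    ⟨card_eq_three_of_mem_posBlocks hab hkl (by simp [posBlocks]),
      card_eq_three_of_mem_posBlocks hab hkl (by simp [posBlocks])⟩
  obtain ⟨ha, hb, hne⟩ := Sum.elim_injective.mp hab
  simp only [edgeTrade, sum_sub_distrib, sum_add_distrib, sum_ite_eq', mem_filter, mem_univ,
    true_and, hcard hij, hcard hij.symm]
  obtain ⟨x, y, hxy, rfl⟩ := card_eq_two.mp hP
  simp only [insert_subset_iff, singleton_subset_iff, mem_insert, mem_singleton, pair_eq_pair_iff]
  split_ifs <;> grind

def edgeTradeSum (a b : ι → Fin v) (D : Finset (ι × ι)) (B : Finset (Fin v)) : ℤ :=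
  ∑ q ∈ D, edgeTrade v a b q.1 q.2 B

theorem isTrade_edgeTradeSum (hab : Injective (Sum.elim a b)) {D : Finset (ι × ι)}
    (hloop : ∀ q ∈ D, q.1 ≠ q.2) (hbal : D.val.map Prod.fst = D.val.map Prod.snd) :
    isTrade v (edgeTradeSum a b D) := by
  refine ⟨fun B hB => sum_eq_zero fun q hq => ?_, fun P hP => ?_⟩
  · have h₁ : B ∉ posBlocks a b q.1 q.2 :=
      fun h => hB (card_eq_three_of_mem_posBlocks hab (hloop q hq) h)
    have h₂ : B ∉ posBlocks a b q.2 q.1 :=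
      fun h => hB (card_eq_three_of_mem_posBlocks hab (hloop q hq).symm h)
    simp [edgeTrade_eq hab (hloop q hq), h₁, h₂]
  · simp only [edgeTradeSum]
    rw [sum_comm,
      sum_congr rfl fun q hq => sum_edgeTrade_filter_superset hab (hloop q hq) hP,
      sum_sub_distrib, sub_eq_zero]
    exact sum_fst_eq_sum_snd hbal fun k => 2 * if P = {a k, b k} then 1 else 0

theorem edgeTradeSum_eq_card_sub_card (hab : Injective (Sum.elim a b)) {D : Finset (ι × ι)}
    (hloop : ∀ q ∈ D, q.1 ≠ q.2) (B : Finset (Fin v)) :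
    edgeTradeSum a b D B = ((D.filter fun q => B ∈ posBlocks a b q.1 q.2).card : ℤ) -
      (D.filter fun q => B ∈ posBlocks a b q.2 q.1).card := by
  rw [edgeTradeSum, sum_congr rfl fun q hq => edgeTrade_eq hab (hloop q hq) B, sum_sub_distrib,
    sum_boole, sum_boole]

theorem card_filter_mem_posBlocks_add_le_one (hab : Injective (Sum.elim a b))
    {D : Finset (ι × ι)} (hloop : ∀ q ∈ D, q.1 ≠ q.2)
    (hinj : Set.InjOn (fun q : ι × ι => s(q.1, q.2)) D) (B : Finset (Fin v)) :
    (D.filter fun q => B ∈ posBlocks a b q.1 q.2).card +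
      (D.filter fun q => B ∈ posBlocks a b q.2 q.1).card ≤ 1 := by
  classical
  rw [← card_union_of_disjoint, ← filter_or, card_le_one]
  · simp only [mem_filter]
    rintro ⟨x, y⟩ ⟨hq, hB⟩ ⟨x', y'⟩ ⟨hq', hB'⟩
    refine hinj hq hq' ?_
    have hxy' : x' ≠ y' := hloop _ hq'
    rcases hB with h | h <;> rcases hB' with h' | h' <;>
      obtain ⟨rfl, rfl⟩ := eq_of_mem_posBlocks hab (by grind) h h' <;> simp [Sym2.eq_swap]
  · exact disjoint_filter.mpr fun q hq h h' =>
      hloop q hq (eq_of_mem_posBlocks hab (hloop q hq).symm h h').1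

theorem isSimple_edgeTradeSum (hab : Injective (Sum.elim a b)) {D : Finset (ι × ι)}
    (hloop : ∀ q ∈ D, q.1 ≠ q.2) (hinj : Set.InjOn (fun q : ι × ι => s(q.1, q.2)) D) :
    isSimple v (edgeTradeSum a b D) := fun B => by
  have := card_filter_mem_posBlocks_add_le_one hab hloop hinj B
  rw [edgeTradeSum_eq_card_sub_card hab hloop]
  omega

theorem volume_edgeTradeSum (hab : Injective (Sum.elim a b)) {D : Finset (ι × ι)}
    (hloop : ∀ q ∈ D, q.1 ≠ q.2) (hinj : Set.InjOn (fun q : ι × ι => s(q.1, q.2)) D) :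
    volume v (edgeTradeSum a b D) = 2 * D.card := by
  have hmax (B : Finset (Fin v)) : max (edgeTradeSum a b D B) 0 =
      (D.filter fun q => B ∈ posBlocks a b q.1 q.2).card := by
    have := card_filter_mem_posBlocks_add_le_one hab hloop hinj B
    rw [edgeTradeSum_eq_card_sub_card hab hloop]
    omega
  calc volume v (edgeTradeSum a b D)
      = ∑ B, ∑ q ∈ D, if B ∈ posBlocks a b q.1 q.2 then (1 : ℤ) else 0 := by
        simp only [volume, hmax, sum_boole]
    _ = ∑ q ∈ D, ∑ B, if B ∈ posBlocks a b q.1 q.2 then (1 : ℤ) else 0 := sum_comm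
    _ = ∑ q ∈ D, 2 := sum_congr rfl fun q hq => by
        rw [sum_boole, filter_univ_mem, card_posBlocks hab (hloop q hq)]; rfl
    _ = 2 * D.card := by rw [sum_const, nsmul_eq_mul, mul_comm]

end EdgeTrade

section Tournament

variable {α : Type*}

def cycleEdges (l : List α) : Multiset (α × α) := (l.zip (l.rotate 1) : List (α × α))

theorem map_fst_cycleEdges_eq_map_snd (l : List α) :
    (cycleEdges l).map Prod.fst = (cycleEdges l).map Prod.snd := by
  simp [cycleEdges, List.map_fst_zip, List.map_snd_zip, (List.rotate_perm l 1).symm]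

theorem count_cycleEdges_three [DecidableEq α] {x y z : α} (hxy : x ≠ y) (hyz : y ≠ z)
    (hzx : z ≠ x) (u w : α) :
    ((cycleEdges [x, y, z]).map fun q => s(q.1, q.2)).count s(u, w) =
      if u ≠ w ∧ (u = x ∨ u = y ∨ u = z) ∧ (w = x ∨ w = y ∨ w = z) then 1 else 0 := by
  simp [cycleEdges, List.rotate, List.count_cons]
  split_ifs <;> grind

theorem count_cycleEdges_four [DecidableEq α] {w x y z : α} (hwx : w ≠ x) (hwy : w ≠ y)
    (hwz : w ≠ z) (hxz : x ≠ z) (u u' : α) :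
    ((cycleEdges [w, x, y, z]).map fun q => s(q.1, q.2)).count s(u, u') =
      if (u = w ∨ u = y) ∧ (u' = x ∨ u' = z) ∨ (u = x ∨ u = z) ∧ (u' = w ∨ u' = y)
      then 1 else 0 := by
  simp [cycleEdges, List.rotate, List.count_cons]
  split_ifs <;> grind

theorem count_bind_cycleEdges_of_steiner [DecidableEq α] {Y : α → Prop} [DecidablePred Y]
    {S : Finset (α × α × α)} (hdist : ∀ t ∈ S, t.1 ≠ t.2.1 ∧ t.1 ≠ t.2.2 ∧ t.2.1 ≠ t.2.2)
    (hsub : ∀ t ∈ S, Y t.1 ∧ Y t.2.1 ∧ Y t.2.2)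
    (hsts : ∀ x y, Y x → Y y → x ≠ y → ∃! t, t ∈ S ∧
      (x = t.1 ∨ x = t.2.1 ∨ x = t.2.2) ∧ (y = t.1 ∨ y = t.2.1 ∨ y = t.2.2)) (u w : α) :
    ((S.val.bind fun t => cycleEdges [t.1, t.2.1, t.2.2]).map fun q => s(q.1, q.2)).count
      s(u, w) = if u ≠ w ∧ Y u ∧ Y w then 1 else 0 := by
  rw [Multiset.map_bind, Multiset.count_bind, ← sum_eq_multiset_sum,
    sum_congr rfl fun t ht => count_cycleEdges_three (hdist t ht).1 (hdist t ht).2.2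
      (hdist t ht).2.1.symm u w, sum_boole]
  split_ifs with h
  · obtain ⟨huw, hu, hw⟩ := h
    simpa only [huw, ne_eq, not_false_eq_true, true_and, Nat.cast_id] using
      card_filter_eq_one_of_existsUnique (hsts u w hu hw huw)
  · refine card_eq_zero.mpr (filter_eq_empty_iff.mpr fun t ht ⟨huw, hu, hw⟩ => h ⟨huw, ?_, ?_⟩)
    · rcases hu with rfl | rfl | rfl <;> simp [hsub t ht]
    · rcases hw with rfl | rfl | rfl <;> simp [hsub t ht]

theorem count_bind_cycleEdges_of_matching [DecidableEq α] {X : α → Prop} [DecidablePred X]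
    {M : Finset (α × α)} {d e : α} (hde : d ≠ e) (hd : ¬X d)
    (hM : ∀ p ∈ M, p.1 ≠ p.2 ∧ X p.1 ∧ X p.2)
    (hcover : ∀ x, X x → ∃! p, p ∈ M ∧ (x = p.1 ∨ x = p.2)) (u w : α) :
    ((M.val.bind fun p => cycleEdges [d, p.1, e, p.2]).map fun q => s(q.1, q.2)).count
      s(u, w) = if (u = d ∨ u = e) ∧ X w ∨ X u ∧ (w = d ∨ w = e) then 1 else 0 := by
  have hdX : ∀ x, X x → d ≠ x := fun x hx h => hd (h ▸ hx)
  rw [Multiset.map_bind, Multiset.count_bind, ← sum_eq_multiset_sum,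
    sum_congr rfl fun p hp => count_cycleEdges_four (hdX _ (hM p hp).2.1) hde
      (hdX _ (hM p hp).2.2) (hM p hp).1 u w, sum_boole, Nat.cast_id]
  split_ifs with h
  · rcases h with ⟨hu, hw⟩ | ⟨hu, hw⟩
    · rw [filter_congr fun p hp => (by grind : _ ↔ w = p.1 ∨ w = p.2)]
      exact card_filter_eq_one_of_existsUnique (hcover w hw)
    · rw [filter_congr fun p hp => (by grind : _ ↔ u = p.1 ∨ u = p.2)]
      exact card_filter_eq_one_of_existsUnique (hcover u hu)
  · refine card_eq_zero.mpr (filter_eq_empty_iff.mpr fun p hp hp' => h ?_)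
    grind

def IsTournament [DecidableEq α] (D : Multiset (α × α)) : Prop :=
  ∀ u w : α, (D.map fun q => s(q.1, q.2)).count s(u, w) = if u = w then 0 else 1

namespace IsTournament

variable [DecidableEq α] {D : Multiset (α × α)}

theorem nodup_map (h : IsTournament D) : (D.map fun q => s(q.1, q.2)).Nodup :=
  Multiset.nodup_iff_count_le_one.mpr fun z =>
    Sym2.ind (fun u w => by rw [h u w]; split_ifs <;> omega) z

theorem fst_ne_snd (h : IsTournament D) {q : α × α} (hq : q ∈ D) : q.1 ≠ q.2 := fun heq => by
  have := Multiset.count_pos.mpr (Multiset.mem_map_of_mem (fun q : α × α => s(q.1, q.2)) hq)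
  rw [h, if_pos heq] at this
  exact lt_irrefl _ this

theorem card [Fintype α] (h : IsTournament D) : D.card = (Fintype.card α).choose 2 := by
  have hmap : (D.map fun q => s(q.1, q.2)) = (univ.filter fun z : Sym2 α => ¬z.IsDiag).val := by
    ext z
    induction z using Sym2.ind with
    | _ u w => rw [h, Multiset.count_eq_of_nodup (nodup _)]; simp
  rw [← Multiset.card_map (fun q : α × α => s(q.1, q.2)), hmap, ← card_def,
    ← Sym2.card_subtype_not_diag, Fintype.card_subtype]

end IsTournament

def steinerMatchingEdges (S : Finset (α × α × α)) (M : Finset (α × α)) (c d e : α) :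
    Multiset (α × α) :=
  S.val.bind (fun t => cycleEdges [t.1, t.2.1, t.2.2]) + cycleEdges [c, d, e] +
    M.val.bind fun p => cycleEdges [d, p.1, e, p.2]

variable {S : Finset (α × α × α)} {M : Finset (α × α)} {c d e : α}

theorem map_fst_steinerMatchingEdges_eq_map_snd :
    (steinerMatchingEdges S M c d e).map Prod.fst =
      (steinerMatchingEdges S M c d e).map Prod.snd := by
  simp only [steinerMatchingEdges, Multiset.map_add, Multiset.map_bind,
    map_fst_cycleEdges_eq_map_snd]

theorem sum_map_steinerMatchingEdges {A : Type*} [AddCommMonoid A] (F : α × α → A) :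
    ((steinerMatchingEdges S M c d e).map F).sum =
      ∑ t ∈ S, (F (t.1, t.2.1) + F (t.2.1, t.2.2) + F (t.2.2, t.1)) +
        (F (c, d) + F (d, e) + F (e, c)) +
        ∑ p ∈ M, (F (d, p.1) + F (p.1, e) + F (e, p.2) + F (p.2, d)) := by
  simp [steinerMatchingEdges, cycleEdges, List.rotate, Multiset.map_bind, Multiset.sum_bind,
    add_assoc]

end Tournament

theorem injective_sumElim_of_val_eq {m v : ℕ} {a b : Fin m → Fin v}
    (ha : ∀ i : Fin m, (a i : ℕ) = i) (hb : ∀ i : Fin m, (b i : ℕ) = i + m) :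
    Injective (Sum.elim a b) :=
  Sum.elim_injective.mpr
    ⟨fun i j h => Fin.ext (by simpa [ha] using congrArg Fin.val h),
      fun i j h => Fin.ext (by simpa [hb] using congrArg Fin.val h),
      fun i j h => by have h' := congrArg Fin.val h; rw [ha, hb] at h'; omega⟩

theorem isTournament_steinerMatchingEdges {n m : ℕ} (hn : 1 ≤ n) (hm : m = 2 * n + 1)
    {S : Finset (Fin m × Fin m × Fin m)}
    (hSdist : ∀ t ∈ S, t.1 ≠ t.2.1 ∧ t.1 ≠ t.2.2 ∧ t.2.1 ≠ t.2.2)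
    (hSsub : ∀ t ∈ S, (t.1 : ℕ) < 2 * n - 1 ∧ (t.2.1 : ℕ) < 2 * n - 1 ∧ (t.2.2 : ℕ) < 2 * n - 1)
    (hSsts : ∀ x y : Fin m, (x : ℕ) < 2 * n - 1 → (y : ℕ) < 2 * n - 1 → x ≠ y → ∃! t, t ∈ S ∧
      (x = t.1 ∨ x = t.2.1 ∨ x = t.2.2) ∧ (y = t.1 ∨ y = t.2.1 ∨ y = t.2.2))
    {M : Finset (Fin m × Fin m)}
    (hMdist : ∀ p ∈ M, p.1 ≠ p.2 ∧ (p.1 : ℕ) < 2 * n - 2 ∧ (p.2 : ℕ) < 2 * n - 2)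
    (hMcover : ∀ x : Fin m, (x : ℕ) < 2 * n - 2 → ∃! p, p ∈ M ∧ (x = p.1 ∨ x = p.2))
    {c d e : Fin m} (hc : (c : ℕ) = 2 * n - 2) (hd : (d : ℕ) = 2 * n - 1)
    (he : (e : ℕ) = 2 * n) :
    IsTournament (steinerMatchingEdges S M c d e) := by
  have hcd : c ≠ d := Fin.ne_of_val_ne (by omega)
  have hde : d ≠ e := Fin.ne_of_val_ne (by omega)
  have hec : e ≠ c := Fin.ne_of_val_ne (by omega)
  intro u w
  simp only [steinerMatchingEdges, Multiset.map_add, Multiset.count_add]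
  rw [count_bind_cycleEdges_of_steiner (Y := fun x : Fin m => (x : ℕ) < 2 * n - 1)
      hSdist hSsub hSsts,
    count_cycleEdges_three hcd hde hec,
    count_bind_cycleEdges_of_matching (X := fun x : Fin m => (x : ℕ) < 2 * n - 2) hde
      (by omega) hMdist hMcover]
  have := u.isLt
  have := w.isLt
  simp only [Fin.ext_iff, hc, hd, he]
  split_ifs <;> omega

theorem sts_matching_cycle_trade_general
    (n : ℕ) (hn : 2 ≤ n) (v m : ℕ) (hm : m = 2 * n + 1)
    (a b : Fin m → Fin v)
    (ha : ∀ i : Fin m, (a i : ℕ) = (i : ℕ)) (hb : ∀ i : Fin m, (b i : ℕ) = (i : ℕ) + m)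
    (S : Finset (Fin m × Fin m × Fin m))
    (hSdist : ∀ t ∈ S, t.1 ≠ t.2.1 ∧ t.1 ≠ t.2.2 ∧ t.2.1 ≠ t.2.2)
    (hSsub : ∀ t ∈ S, (t.1 : ℕ) < 2 * n - 1 ∧ (t.2.1 : ℕ) < 2 * n - 1 ∧ (t.2.2 : ℕ) < 2 * n - 1)
    (hSsts : ∀ x y : Fin m, (x : ℕ) < 2 * n - 1 → (y : ℕ) < 2 * n - 1 → x ≠ y → ∃! t, t ∈ S ∧
      (x = t.1 ∨ x = t.2.1 ∨ x = t.2.2) ∧ (y = t.1 ∨ y = t.2.1 ∨ y = t.2.2))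
    (M : Finset (Fin m × Fin m))
    (hMdist : ∀ p ∈ M, p.1 ≠ p.2 ∧ (p.1 : ℕ) < 2 * n - 2 ∧ (p.2 : ℕ) < 2 * n - 2)
    (hMcover : ∀ x : Fin m, (x : ℕ) < 2 * n - 2 → ∃! p, p ∈ M ∧ (x = p.1 ∨ x = p.2))
    (c d e : Fin m) (hc : (c : ℕ) = 2 * n - 2) (hd : (d : ℕ) = 2 * n - 1) (he : (e : ℕ) = 2 * n)
    (h₂ : Finset (Fin v) → ℤ)
    (hh₂ : h₂ = fun B =>
      (∑ t ∈ S, (edgeTrade v a b t.1 t.2.1 B + edgeTrade v a b t.2.1 t.2.2 B +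
        edgeTrade v a b t.2.2 t.1 B)) +
      (edgeTrade v a b c d B + edgeTrade v a b d e B + edgeTrade v a b e c B) +
      ∑ p ∈ M, (edgeTrade v a b d p.1 B + edgeTrade v a b p.1 e B +
        edgeTrade v a b e p.2 B + edgeTrade v a b p.2 d B)) :
    isTrade v h₂ ∧ isSimple v h₂ ∧ volume v h₂ = 2 * Nat.choose (2 * n + 1) 2 := by
  have hD := isTournament_steinerMatchingEdges (by omega) hm hSdist hSsub hSsts hMdist hMcover
    hc hd he
  let D : Finset (Fin m × Fin m) := ⟨steinerMatchingEdges S M c d e, hD.nodup_map.of_map _⟩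
  have hloop : ∀ q ∈ D, q.1 ≠ q.2 := fun q hq => hD.fst_ne_snd hq
  have hinj : Set.InjOn (fun q : Fin m × Fin m => s(q.1, q.2)) D :=
    fun q hq q' hq' => Multiset.inj_on_of_nodup_map hD.nodup_map q hq q' hq'
  have hab := injective_sumElim_of_val_eq ha hb
  have hh₂D : h₂ = edgeTradeSum a b D := by
    subst hh₂
    funext B
    exact (sum_map_steinerMatchingEdges fun q => edgeTrade v a b q.1 q.2 B).symm
  subst hh₂D
  refine ⟨isTrade_edgeTradeSum hab hloop map_fst_steinerMatchingEdges_eq_map_snd,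
    isSimple_edgeTradeSum hab hloop hinj, ?_⟩
  rw [volume_edgeTradeSum hab hloop hinj, card_mk, hD.card, Fintype.card_fin, hm]

/-- For `n ≥ 2`, `v = 4n+2`, `m = 2n+1`, `aᵢ = i`, `bᵢ = i + m`, an oriented
Steiner triple system `S'` on `{0,…,2n-2}` and a perfect matching `M` on `{0,…,2n-3}` into
`n-1` ordered pairs, the trade `h₂` (block cycle trades of `S'`, plus the triangle
`E(2n-2,2n-1) + E(2n-1,2n) + E(2n,2n-2)`, plus for each pair `(i,j)` of `M` the 4-cycle
`E(2n-1,i) + E(i,2n) + E(2n,j) + E(j,2n-1)`) is a simple `T(2,3,4n+2)` trade of volume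
`2·C(2n+1,2) = 2n(2n+1)`. -/
theorem sts_matching_cycle_trade
    (n : ℕ) (hn : 2 ≤ n) (v m : ℕ) (hv : v = 4 * n + 2) (hm : m = 2 * n + 1)
    (a b : Fin m → Fin v)
    (ha : ∀ i : Fin m, (a i : ℕ) = (i : ℕ)) (hb : ∀ i : Fin m, (b i : ℕ) = (i : ℕ) + m)
    (S : Finset (Fin m × Fin m × Fin m))
    (hSdist : ∀ t ∈ S, t.1 ≠ t.2.1 ∧ t.1 ≠ t.2.2 ∧ t.2.1 ≠ t.2.2)
    (hSsub : ∀ t ∈ S, (t.1 : ℕ) < 2 * n - 1 ∧ (t.2.1 : ℕ) < 2 * n - 1 ∧ (t.2.2 : ℕ) < 2 * n - 1)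
    (hSsts : ∀ x y : Fin m, (x : ℕ) < 2 * n - 1 → (y : ℕ) < 2 * n - 1 → x ≠ y → ∃! t, t ∈ S ∧
      (x = t.1 ∨ x = t.2.1 ∨ x = t.2.2) ∧ (y = t.1 ∨ y = t.2.1 ∨ y = t.2.2))
    (M : Finset (Fin m × Fin m))
    (hMdist : ∀ p ∈ M, p.1 ≠ p.2 ∧ (p.1 : ℕ) < 2 * n - 2 ∧ (p.2 : ℕ) < 2 * n - 2)
    (hMcover : ∀ x : Fin m, (x : ℕ) < 2 * n - 2 → ∃! p, p ∈ M ∧ (x = p.1 ∨ x = p.2))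
    (hMcard : M.card = n - 1)
    (c d e : Fin m) (hc : (c : ℕ) = 2 * n - 2) (hd : (d : ℕ) = 2 * n - 1) (he : (e : ℕ) = 2 * n)
    (h₂ : Finset (Fin v) → ℤ)
    (hh₂ : h₂ = fun B =>
      (∑ t ∈ S, (edgeTrade v a b t.1 t.2.1 B + edgeTrade v a b t.2.1 t.2.2 B +
        edgeTrade v a b t.2.2 t.1 B)) +
      (edgeTrade v a b c d B + edgeTrade v a b d e B + edgeTrade v a b e c B) +
      ∑ p ∈ M, (edgeTrade v a b d p.1 B + edgeTrade v a b p.1 e B +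
        edgeTrade v a b e p.2 B + edgeTrade v a b p.2 d B)) :
    isTrade v h₂ ∧ isSimple v h₂ ∧ volume v h₂ = 2 * Nat.choose (2 * n + 1) 2 :=
  sts_matching_cycle_trade_general n hn v m hm a b ha hb S hSdist hSsub hSsts M hMdist hMcover c d e
    hc hd he h₂ hh₂
end
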